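/- arXiv:1905.05745 — 4 statements merged into one kernel-verified Lean document; each statement's English description precedes it below -/
import Mathlib

section
/- Let K be a complete discretely valued field with valuation v, residue field a finite field F of odd characteristic, and let a be a unit of the valuation ring of K. Then the Hilbert symbol (a,b) = -1 if and only if v(b) is odd and the residue of a is a nonsquare in F. -/
open Quaternion Polynomial IsLocalRing WithZero
open scoped WithZero

/-!
In `ℍ[K, a, b]` the element `w + x i + y j + z k` is invertible iff its reduced norm
`N(w, x) - b N(y, z)` is nonzero, where `N(s, t) = s² - a t²` is the norm form of `K(√a)`.
If the residue of `a` is a nonsquare, then `v (N(s, t)) = max (v s) (v t) ^ 2` is a square, so a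
nontrivial zero `N(w, x) = b N(y, z)` of the reduced norm forces `v b` to have even exponent.
Conversely, Hensel's lemma makes `a` a square when its residue is one, and when `v b` is even,
`b = u π⁻²ᵐ` with `u` a unit; `N` is onto the units of the finite residue field, hence by Hensel
onto the units of the valuation ring, and a solution of `N(w, x) = u` gives the zero
`w + x i + πᵐ j` of the reduced norm.
-/

namespace FiniteField

variable {F : Type*} [Field F] [Finite F]

theorem two_ne_zero_of_odd_card (hF : Odd (Nat.card F)) : (2 : F) ≠ 0 := by
  have := Fintype.ofFinite F
  refine Ring.two_ne_zero fun hc => ?_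
  rw [Nat.card_eq_fintype_card, Nat.odd_iff, even_card_of_char_two hc] at hF
  exact zero_ne_one hF

theorem exists_sq_sub_mul_sq_eq (hF : Odd (Nat.card F)) {a : F} (ha : a ≠ 0) (u : F) :
    ∃ w x : F, w ^ 2 - a * x ^ 2 = u := by
  have := Fintype.ofFinite F
  rw [Nat.card_eq_fintype_card, Nat.odd_iff] at hF
  obtain ⟨w, x, h⟩ := exists_root_sum_quadratic (degree_X_pow_sub_C two_pos u)
    (degree_C_mul_X_pow 2 (neg_ne_zero.mpr ha)) hF
  refine ⟨w, x, ?_⟩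
  simp only [eval_sub, eval_pow, eval_X, eval_C, eval_mul] at h
  linear_combination h

end FiniteField

theorem HenselianRing.isSquare_of_isSquare_residue {R : Type*} [CommRing R] [IsLocalRing R]
    [HenselianRing R (maximalIdeal R)] (h2 : (2 : ResidueField R) ≠ 0) {s : R}
    (hs : residue R s ≠ 0) (hsq : IsSquare (residue R s)) : IsSquare s := by
  obtain ⟨r, hr⟩ := hsq
  obtain ⟨t₀, rfl⟩ := residue_surjective r
  have hroot : (X ^ 2 - C s).eval t₀ ∈ maximalIdeal R := by
    rw [← residue_eq_zero_iff]
    simp [hr, sq]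
  have hderiv : IsUnit (residue R ((X ^ 2 - C s).derivative.eval t₀)) := by
    have ht₀ : residue R t₀ ≠ 0 := fun h => hs (by rw [hr, h, mul_zero])
    have hd : (X ^ 2 - C s).derivative.eval t₀ = 2 * t₀ := by simp [one_add_one_eq_two]
    rw [hd, map_mul, map_ofNat]
    exact isUnit_iff_ne_zero.mpr (mul_ne_zero h2 ht₀)
  obtain ⟨t, ht, -⟩ := HenselianRing.is_henselian _ (monic_X_pow_sub_C s two_ne_zero) t₀ hroot hderiv
  exact ⟨t, by simpa [sub_eq_zero, sq, eq_comm] using ht⟩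

namespace QuaternionAlgebra

theorem re_mul_star_eq {R : Type*} [CommRing R] {c₁ c₂ : R} (x : ℍ[R,c₁,c₂]) :
    (x * star x).re = (x.re ^ 2 - c₁ * x.imI ^ 2) - c₂ * (x.imJ ^ 2 - c₁ * x.imK ^ 2) := by
  simp only [re_mul, re_star, imI_star, imJ_star, imK_star]
  ring

theorem isUnit_iff_re_mul_star_ne_zero {K : Type*} [Field K] {c₁ c₂ c₃ : K}
    {x : ℍ[K,c₁,c₂,c₃]} : IsUnit x ↔ (x * star x).re ≠ 0 := by
  constructor
  · intro hx h
    have : x * star x = 0 := by rw [mul_star_eq_coe, h, coe_zero]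
    rw [hx.mul_right_eq_zero, star_eq_zero] at this
    exact not_isUnit_zero (this ▸ hx)
  · intro h
    have hstar : (star x * x).re = (x * star x).re := by
      simp only [re_mul, re_star, imI_star, imJ_star, imK_star]
      ring
    set n := (x * star x).re
    have hl : x * star x = n := mul_star_eq_coe x
    have hr : star x * x = n := by rw [star_mul_eq_coe, hstar]
    refine ⟨⟨x, n⁻¹ • star x, ?_, ?_⟩, rfl⟩
    · rw [mul_smul_comm, hl]
      ext <;> simp [h]
    · rw [smul_mul_assoc, hr]
      ext <;> simp [h]

end QuaternionAlgebra

namespace WithZero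

theorem lt_one_iff_le_exp_neg_one {x : ℤᵐ⁰} : x < 1 ↔ x ≤ exp (-1) := by
  rcases eq_or_ne x 0 with rfl | hx
  · simp
  rw [← exp_log hx, ← exp_zero, exp_lt_exp, exp_le_exp]
  omega

theorem even_of_exp_mul_sq_eq_sq {n : ℤ} {c d : ℤᵐ⁰} (hd : d ≠ 0) (h : exp n * d ^ 2 = c ^ 2) :
    Even n := by
  have hc : c ≠ 0 := by rintro rfl; simp [hd] at h
  have := congrArg log h
  rw [log_mul exp_ne_zero (pow_ne_zero 2 hd), log_pow, log_pow, log_exp] at this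
  exact ⟨log c - log d, by simp only [nsmul_eq_mul] at this; push_cast at this; linarith⟩

end WithZero

namespace ValuationSubring

variable {K : Type*} [Field K] (A : ValuationSubring K)

instance [TopologicalSpace K] [IsTopologicalRing K] : IsTopologicalRing A :=
  inferInstanceAs (IsTopologicalRing A.toSubring)

instance [UniformSpace K] [IsUniformAddGroup K] : IsUniformAddGroup A :=
  inferInstanceAs (IsUniformAddGroup A.toSubring.toAddSubgroup)

end ValuationSubring

namespace Valued

variable {K : Type*} [Field K] [Valued K ℤᵐ⁰]

local notation "O" => (Valued.v.valuationSubring : ValuationSubring K)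

theorem isUnit_iff_v_eq_one {x : O} : IsUnit x ↔ v (x : K) = 1 :=
  (Valuation.valuationSubring.integers v).isUnit_iff_valuation_eq_one

theorem residue_ne_zero_iff {x : O} : residue O x ≠ 0 ↔ v (x : K) = 1 := by
  rw [residue_ne_zero_iff_isUnit, isUnit_iff_v_eq_one]

theorem mem_span_singleton_iff {x y : O} : x ∈ Ideal.span {y} ↔ v (x : K) ≤ v (y : K) := by
  rw [Ideal.mem_span_singleton, (Valuation.valuationSubring.integers v).dvd_iff_le]
  rfl

theorem v_sq_sub_mul_sq {a : K} (ha : v a = 1)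
    (hsq : ¬IsSquare (residue O ⟨a, le_of_eq ha⟩)) (w x : K) :
    v (w ^ 2 - a * x ^ 2) = max (v w) (v x) ^ 2 := by
  have hmax : max (v w) (v x) ^ 2 = max (v (w ^ 2)) (v (a * x ^ 2)) := by
    rw [map_mul, ha, one_mul, map_pow, map_pow]
    exact (pow_left_mono 2).map_max
  rcases ne_or_eq (v w) (v x) with hne | heq
  · rw [hmax, sub_eq_add_neg, Valuation.map_add_of_distinct_val, Valuation.map_neg]
    rw [Valuation.map_neg, map_mul, ha, one_mul, map_pow, map_pow]
    exact fun h => hne ((pow_left_inj₀ zero_le zero_le two_ne_zero).mp h)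
  rcases eq_or_ne x 0 with rfl | hx
  · rw [map_zero, map_eq_zero] at heq
    simp [heq]
  have hu : v (w / x) = 1 := by rw [map_div₀, heq, div_self (by simpa using hx)]
  have hres : v ((w / x) ^ 2 - a) = 1 := by
    let u : O := ⟨w / x, le_of_eq hu⟩
    refine residue_ne_zero_iff (x := u ^ 2 - ⟨a, le_of_eq ha⟩) |>.mp ?_
    rw [map_sub, sub_ne_zero]
    exact fun h => hsq ⟨residue O u, by rw [← h, map_pow, sq]⟩
  rw [show w ^ 2 - a * x ^ 2 = x ^ 2 * ((w / x) ^ 2 - a) by field_simp, map_mul, hres, heq,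
    max_self, map_pow, mul_one]

section Uniformizer

variable {π : K} (hπ : v π = exp (-1))
include hπ

theorem mem_maximalIdeal_pow_iff (x : O) (n : ℕ) :
    x ∈ IsLocalRing.maximalIdeal O ^ n ↔ v (x : K) ≤ exp (-(n : ℤ)) := by
  have hπO : π ∈ O := by
    rw [Valuation.mem_valuationSubring_iff, hπ, ← exp_zero, exp_le_exp]
    norm_num
  have hmax : IsLocalRing.maximalIdeal O = Ideal.span {⟨π, hπO⟩} := by
    ext y
    rw [mem_maximalIdeal, mem_nonunits_iff, isUnit_iff_v_eq_one, mem_span_singleton_iff, hπ,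
      ← lt_one_iff_le_exp_neg_one]
    exact y.2.lt_iff_ne.symm
  rw [hmax, Ideal.span_singleton_pow, mem_span_singleton_iff]
  simp [hπ, ← exp_nsmul]

theorem isAdic_maximalIdeal : IsAdic (IsLocalRing.maximalIdeal O) := by
  have hpow (n : ℕ) : ((IsLocalRing.maximalIdeal O ^ n : Ideal O) : Set O) =
      Subtype.val ⁻¹' {y : K | v y ≤ exp (-(n : ℤ))} :=
    Set.ext (mem_maximalIdeal_pow_iff hπ · n)
  rw [isAdic_iff]
  refine ⟨fun n => ?_, fun s hs => ?_⟩
  · rw [hpow]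
    refine IsOpen.preimage continuous_subtype_val ?_
    have hπn : v.restrict (π ^ n) ≠ 0 := by
      have hπ0 : π ≠ 0 := v.ne_zero_iff.mp (hπ ▸ exp_ne_zero)
      simp [hπ0]
    have hball : {y : K | v y ≤ exp (-(n : ℤ))} = {y | v.restrict y ≤ v.restrict (π ^ n)} := by
      ext y
      rw [Set.mem_ofPred_eq, Set.mem_ofPred_eq, Valuation.restrict_le_iff, map_pow, hπ,
        ← exp_nsmul]
      simp
    exact hball ▸ isOpen_closedBall K hπn
  · obtain ⟨u, hu, hus⟩ := (mem_nhds_subtype _ _ _).mp hs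
    rw [ZeroMemClass.coe_zero] at hu
    obtain ⟨γ, hγ⟩ := mem_nhds_zero.mp hu
    have hγ0 : MonoidWithZeroHom.ValueGroup₀.embedding γ.1 ≠ 0 := by simp
    refine ⟨(-log (MonoidWithZeroHom.ValueGroup₀.embedding γ.1)).toNat + 1, ?_⟩
    rw [hpow]
    intro x hx
    refine hus (hγ ((Valuation.restrict_lt_iff_lt_embedding _).mpr (hx.trans_lt ?_)))
    exact (exp_lt_exp.mpr (by omega)).trans_eq (exp_log hγ0)

theorem isAdicComplete_maximalIdeal [CompleteSpace K] :
    IsAdicComplete (IsLocalRing.maximalIdeal O) O :=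
  (isAdic_maximalIdeal hπ).isAdicComplete_iff.mpr
    ⟨(isClosed_valuationSubring K).completeSpace_coe, inferInstance⟩

end Uniformizer

theorem exists_sq_sub_mul_sq_eq [Finite (IsLocalRing.ResidueField O)]
    [HenselianRing O (IsLocalRing.maximalIdeal O)]
    (hodd : Odd (Nat.card (IsLocalRing.ResidueField O)))
    {a u : K} (ha : v a = 1) (hu : v u = 1) : ∃ w x : K, w ^ 2 - a * x ^ 2 = u := by
  set aO : O := ⟨a, le_of_eq ha⟩
  set uO : O := ⟨u, le_of_eq hu⟩
  have h2 := FiniteField.two_ne_zero_of_odd_card hodd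
  have ha' : residue O aO ≠ 0 := residue_ne_zero_iff.mpr ha
  obtain ⟨w', x', h⟩ := FiniteField.exists_sq_sub_mul_sq_eq hodd ha' (residue O uO)
  rcases eq_or_ne x' 0 with rfl | hx'
  · obtain ⟨t, ht⟩ := HenselianRing.isSquare_of_isSquare_residue h2
      (residue_ne_zero_iff.mpr hu) ⟨w', by rw [← h]; ring⟩
    exact ⟨t, 0, by simpa [sq] using congrArg Subtype.val ht.symm⟩
  -- For any lift `w` of `w'`, `a (w² - u)` has residue `(ā x')²`, hence is a square `t²`,
  -- and `x = t / a` solves the equation.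
  obtain ⟨w, rfl⟩ := residue_surjective w'
  have hres : residue O (aO * (w ^ 2 - uO)) = residue O aO * x' * (residue O aO * x') := by
    rw [map_mul, map_sub, map_pow]
    linear_combination residue O aO * h
  obtain ⟨t, ht⟩ := HenselianRing.isSquare_of_isSquare_residue h2
    (by rw [hres]; exact mul_ne_zero (mul_ne_zero ha' hx') (mul_ne_zero ha' hx')) ⟨_, hres⟩
  have ht' : a * ((w : K) ^ 2 - u) = t * t := congrArg Subtype.val ht
  have ha0 : a ≠ 0 := by rintro rfl; simp at ha
  refine ⟨w, t / a, ?_⟩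
  field_simp
  linear_combination ht'

theorem re_mul_star_ne_zero_of_odd {a b : K} (ha : v a = 1)
    (hsq : ¬IsSquare (residue O ⟨a, le_of_eq ha⟩)) {n : ℤ} (hb : v b = exp n) (hn : Odd n)
    {x : ℍ[K,a,b]} (hx : x ≠ 0) : (x * star x).re ≠ 0 := by
  rw [QuaternionAlgebra.re_mul_star_eq, sub_ne_zero]
  intro h
  have key : max (v x.re) (v x.imI) ^ 2 = exp n * max (v x.imJ) (v x.imK) ^ 2 := by
    rw [← v_sq_sub_mul_sq ha hsq, ← v_sq_sub_mul_sq ha hsq, ← hb, ← map_mul, h]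
  have hmax {p q : K} (h : max (v p) (v q) = 0) : p = 0 ∧ q = 0 :=
    ⟨(Valuation.zero_iff v).mp (le_antisymm (h ▸ le_max_left _ _) zero_le),
      (Valuation.zero_iff v).mp (le_antisymm (h ▸ le_max_right _ _) zero_le)⟩
  rcases eq_or_ne (max (v x.imJ) (v x.imK)) 0 with h0 | h0
  · rw [h0, zero_pow two_ne_zero, mul_zero, pow_eq_zero_iff two_ne_zero] at key
    obtain ⟨h1, h2⟩ := hmax key
    obtain ⟨h3, h4⟩ := hmax h0
    exact hx (QuaternionAlgebra.ext h1 h2 h3 h4)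
  · exact Int.not_even_iff_odd.mpr hn (even_of_exp_mul_sq_eq_sq h0 key.symm)

theorem exists_re_mul_star_eq_zero_of_isSquare [HenselianRing O (IsLocalRing.maximalIdeal O)]
    (h2 : (2 : IsLocalRing.ResidueField O) ≠ 0) {a : K} (ha : v a = 1)
    (hsq : IsSquare (residue O ⟨a, le_of_eq ha⟩)) (b : K) :
    ∃ x : ℍ[K,a,b], x ≠ 0 ∧ (x * star x).re = 0 := by
  obtain ⟨t, ht⟩ := HenselianRing.isSquare_of_isSquare_residue h2 (residue_ne_zero_iff.mpr ha) hsq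
  have ht' : a = t * t := congrArg Subtype.val ht
  refine ⟨⟨t, 1, 0, 0⟩, fun h => one_ne_zero (congrArg QuaternionAlgebra.imI h), ?_⟩
  rw [QuaternionAlgebra.re_mul_star_eq, ht']
  ring

theorem exists_re_mul_star_eq_zero_of_even [Finite (IsLocalRing.ResidueField O)]
    [HenselianRing O (IsLocalRing.maximalIdeal O)]
    (hodd : Odd (Nat.card (IsLocalRing.ResidueField O))) {π : K} (hπ : v π = exp (-1))
    {a b : K} (ha : v a = 1) {n : ℤ} (hb : v b = exp n) (hn : Even n) :
    ∃ x : ℍ[K,a,b], x ≠ 0 ∧ (x * star x).re = 0 := by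
  obtain ⟨m, rfl⟩ := hn
  have hπ0 : π ≠ 0 := v.ne_zero_iff.mp (hπ ▸ exp_ne_zero)
  have hu : v (b * π ^ (m + m)) = 1 := by
    rw [map_mul, map_zpow₀, hπ, hb, ← exp_zsmul, ← exp_add]
    simp
  obtain ⟨w, x, h⟩ := exists_sq_sub_mul_sq_eq hodd ha hu
  refine ⟨⟨w, x, π ^ m, 0⟩, fun h => zpow_ne_zero m hπ0 (congrArg QuaternionAlgebra.imJ h), ?_⟩
  rw [zpow_add₀ hπ0] at h
  rw [QuaternionAlgebra.re_mul_star_eq]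
  linear_combination h

end Valued

open Valued

/-- Over a complete discretely valued field with finite residue field of odd order, for a
valuation unit `a`: the Hilbert symbol `(a,b) = -1` (i.e. `H(a,b)` is a division algebra)
iff `v(b)` is odd and the residue of `a` is a nonsquare. -/
theorem stmt2 (K : Type) [Field K] [Valued K (WithZero (Multiplicative ℤ))] [CompleteSpace K]
    (hdisc : ∃ π : K, Valued.v π = ((Multiplicative.ofAdd (-1 : ℤ) : Multiplicative ℤ) : (WithZero (Multiplicative ℤ))))
    [Finite (IsLocalRing.ResidueField (Valued.v.valuationSubring : ValuationSubring K))]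
    (hodd : Odd (Nat.card (IsLocalRing.ResidueField
      (Valued.v.valuationSubring : ValuationSubring K))))
    (a b : K) (ha : Valued.v a = 1) (hb : b ≠ 0) :
    (∀ x : ℍ[K, a, b], x ≠ 0 → IsUnit x) ↔
      ((∃ n : ℤ, Valued.v b = ((Multiplicative.ofAdd n : Multiplicative ℤ) : (WithZero (Multiplicative ℤ))) ∧ Odd n) ∧
       ¬ IsSquare (IsLocalRing.residue (Valued.v.valuationSubring : ValuationSubring K)
          ⟨a, le_of_eq ha⟩)) := by
  obtain ⟨π, hπ⟩ := hdisc
  have := isAdicComplete_maximalIdeal hπ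
  simp only [QuaternionAlgebra.isUnit_iff_re_mul_star_ne_zero]
  constructor
  · intro hdiv
    obtain ⟨n, hn⟩ : ∃ n : ℤ, v b = exp n := ⟨log (v b), (exp_log (by simpa using hb)).symm⟩
    refine ⟨⟨n, hn, Int.not_even_iff_odd.mp fun hev => ?_⟩, fun hsq => ?_⟩
    · obtain ⟨x, hx, hx0⟩ := exists_re_mul_star_eq_zero_of_even hodd hπ ha hn hev
      exact hdiv x hx hx0
    · obtain ⟨x, hx, hx0⟩ :=
        exists_re_mul_star_eq_zero_of_isSquare (FiniteField.two_ne_zero_of_odd_card hodd) ha hsq b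
      exact hdiv x hx hx0
  · rintro ⟨⟨n, hn, hn_odd⟩, hsq⟩ x hx
    exact re_mul_star_ne_zero_of_odd ha hsq hn hn_odd hx
end

section
/- Let q be an odd prime power, and let f(t), d(t) ∈ F_q[t] be monic irreducible polynomials of opposite parity in degree. Then the law of quadratic reciprocity gives (d/f)·(f/d) = (-1)^{((q-1)/2)·deg(f)·deg(d)} = 1, i.e. d(t) is a square mod f(t) if and only if f(t) is a square mod d(t). -/
/-!
For a monic irreducible `f` of degree `m` over `𝔽_q`, the residue field `K = 𝔽_q[t]/(f)` has
`q^m` elements and its norm to `𝔽_q` is `x ↦ x^((q^m - 1)/(q - 1))`, so a nonzero `x ∈ K` is a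
square iff its norm is a square in `𝔽_q`. The norm of `g mod f` is the resultant `Res(f, g)`,
hence `(g/f) = χ(Res(f, g))` for the quadratic character `χ` of `𝔽_q`. Reciprocity is then
`Res(f, d) = (-1)^(mn) Res(d, f)` together with `χ(-1) = (-1)^((q-1)/2)`.
-/

open Quaternion HahnSeries IsDedekindDomain Polynomial Multiplicative
noncomputable section

open Classical in
/-- The Legendre symbol `(g/f)` for polynomials over `F_q`: `1` if `g` is a square mod `f`,
and `-1` otherwise. -/
def legSym (F : Type) [Field F] (f g : Polynomial F) : ℤ :=
  if IsSquare (Ideal.Quotient.mk (Ideal.span {f}) g) then 1 else -1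

theorem Nat.pow_sub_one_div_sub_one_mul_div_two {q : ℕ} (hq : Odd q) (k : ℕ) :
    (q ^ k - 1) / (q - 1) * (q / 2) = q ^ k / 2 := by
  obtain ⟨c, hc⟩ := Nat.sub_one_dvd_pow_sub_one q k
  obtain ⟨s, hs⟩ := hq.pow (n := k)
  obtain ⟨t, rfl⟩ := hq
  rw [hs] at hc ⊢
  simp only [Nat.add_sub_cancel] at hc ⊢
  rcases Nat.eq_zero_or_pos t with rfl | ht
  · simp at hc
    simp [hc]
  · rw [hc, Nat.mul_div_cancel_left _ (by omega), mul_assoc, show (2 * t + 1) / 2 = t by omega,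
      show (2 * (t * c) + 1) / 2 = t * c by omega, mul_comm]

theorem FiniteField.isSquare_iff_isSquare_norm {K L : Type*} [Field K] [Field L] [Fintype K]
    [Fintype L] [Algebra K L] (hK : ringChar K ≠ 2) {x : L} (hx : x ≠ 0) :
    IsSquare x ↔ IsSquare (Algebra.norm K x) := by
  have hL : ringChar L ≠ 2 := Algebra.ringChar_eq K L ▸ hK
  have hexp : (Nat.card L - 1) / (Nat.card K - 1) * (Fintype.card K / 2) = Fintype.card L / 2 := by
    rw [Nat.card_eq_fintype_card, Nat.card_eq_fintype_card,
      Module.card_eq_pow_finrank (K := K) (V := L)]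
    exact Nat.pow_sub_one_div_sub_one_mul_div_two (Nat.odd_iff.mpr (odd_card_of_char_ne_two hK)) _
  rw [isSquare_iff hL hx, isSquare_iff hK (Algebra.norm_ne_zero_iff.mpr hx),
    ← (algebraMap K L).injective.eq_iff, map_pow, map_one, algebraMap_norm_eq_pow, ← pow_mul, hexp]

theorem AdjoinRoot.norm_mk_eq_resultant {F : Type*} [Field F] [PerfectField F] {f : F[X]}
    (hfm : f.Monic) (hfi : Irreducible f) (g : F[X]) :
    Algebra.norm F (AdjoinRoot.mk f g) = f.resultant g := by
  classical
  have := Fact.mk hfi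
  have := (AdjoinRoot.powerBasis hfi.ne_zero).finite
  let E := AlgebraicClosure F
  have hnodup : (f.aroots E).Nodup := nodup_roots (PerfectField.separable_of_irreducible hfi).map
  apply (algebraMap F E).injective
  rw [Algebra.norm_eq_prod_embeddings F E, ← resultant_map_map, ← natDegree_map (algebraMap F E),
    resultant_eq_prod_eval _ _ _ natDegree_map_le (IsAlgClosed.splits _),
    (hfm.map _).leadingCoeff, one_pow, one_mul,
    Fintype.prod_equiv (AdjoinRoot.equiv E F f hfi.ne_zero) _ (fun x => aeval x.1 g) ?_,
    Finset.prod_mem_multiset _ _ (fun x => aeval x g) (fun _ => rfl), Finset.prod_eq_multiset_prod,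
    Multiset.toFinset_val, hnodup.dedup]
  · simp [aeval_def, eval_map]
  · intro σ
    rw [← AdjoinRoot.aeval_eq, ← aeval_algHom_apply]
    rfl

theorem legSym_eq_quadraticChar_resultant {F : Type} [Field F] [Fintype F] [DecidableEq F]
    (hF : ringChar F ≠ 2) {f g : F[X]} (hfm : f.Monic) (hfi : Irreducible f) (hfg : ¬f ∣ g) :
    legSym F f g = quadraticChar F (f.resultant g) := by
  have := Fact.mk hfi
  have := (AdjoinRoot.powerBasis hfi.ne_zero).finite
  have := Module.finite_of_finite F (M := AdjoinRoot f)
  have : Fintype (AdjoinRoot f) := Fintype.ofFinite _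
  have hx : AdjoinRoot.mk f g ≠ 0 := mt AdjoinRoot.mk_eq_zero.mp hfg
  have hres : f.resultant g ≠ 0 := by
    rw [← AdjoinRoot.norm_mk_eq_resultant hfm hfi]
    exact Algebra.norm_ne_zero_iff.mpr hx
  have hsq := FiniteField.isSquare_iff_isSquare_norm hF hx
  rw [AdjoinRoot.norm_mk_eq_resultant hfm hfi] at hsq
  unfold legSym
  split_ifs with h
  · exact ((quadraticChar_one_iff_isSquare hres).mpr (hsq.mp h)).symm
  · exact (quadraticChar_neg_one_iff_not_isSquare.mpr (mt hsq.mpr h)).symm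

theorem legSym_mul_legSym {F : Type} [Field F] [Fintype F] (hF : ringChar F ≠ 2) {f d : F[X]}
    (hfm : f.Monic) (hfi : Irreducible f) (hdm : d.Monic) (hdi : Irreducible d) (hne : f ≠ d) :
    legSym F f d * legSym F d f =
      (-1 : ℤ) ^ ((Fintype.card F - 1) / 2 * f.natDegree * d.natDegree) := by
  classical
  have hfd : ¬f ∣ d := fun h => hne (eq_of_monic_of_associated hfm hdm (hfi.associated_of_dvd hdi h))
  have hdf : ¬d ∣ f := fun h =>
    hne (eq_of_monic_of_associated hfm hdm (hdi.associated_of_dvd hfi h).symm)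
  have hres : d.resultant f ≠ 0 := resultant_ne_zero _ _ (hdi.coprime_iff_not_dvd.mpr hdf)
  have hcard := FiniteField.odd_card_of_char_ne_two hF
  rw [legSym_eq_quadraticChar_resultant hF hfm hfi hfd,
    legSym_eq_quadraticChar_resultant hF hdm hdi hdf, resultant_comm, map_mul, map_pow,
    quadraticChar_neg_one hF, ZMod.χ₄_eq_neg_one_pow hcard, mul_assoc, ← sq,
    quadraticChar_sq_one hres, mul_one, ← pow_mul, mul_assoc, show Fintype.card F / 2 =
      (Fintype.card F - 1) / 2 by omega]

/-- Quadratic reciprocity in `F_q[t]` for monic irreducibles of opposite degree parity: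
`(d/f)(f/d) = (-1)^(((q-1)/2)·deg f·deg d) = 1`, so `d` is a square mod `f` iff `f` is a
square mod `d`. -/
theorem stmt8 (F : Type) [Field F] [Fintype F] (hq : Odd (Fintype.card F))
    (f d : Polynomial F) (hfm : f.Monic) (hfi : Irreducible f)
    (hdm : d.Monic) (hdi : Irreducible d) (hne : f ≠ d)
    (hpar : Even f.natDegree ↔ Odd d.natDegree) :
    legSym F f d * legSym F d f =
        (-1 : ℤ) ^ (((Fintype.card F - 1) / 2) * f.natDegree * d.natDegree) ∧
    legSym F f d * legSym F d f = 1 ∧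
    (IsSquare (Ideal.Quotient.mk (Ideal.span {f}) d) ↔
      IsSquare (Ideal.Quotient.mk (Ideal.span {d}) f)) := by
  have hF : ringChar F ≠ 2 := fun h => by
    have := FiniteField.even_card_of_char_two h
    rw [Nat.odd_iff] at hq
    omega
  have hrec := legSym_mul_legSym hF hfm hfi hdm hdi hne
  have hdeg : Even (f.natDegree * d.natDegree) := by
    rw [Nat.even_mul]
    rcases Nat.even_or_odd d.natDegree with h | h <;> tauto
  have hone : legSym F f d * legSym F d f = 1 := by
    rw [hrec, mul_assoc]
    exact (hdeg.mul_left _).neg_one_pow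
  refine ⟨hrec, hone, ?_⟩
  unfold legSym at hone
  split_ifs at hone <;> simp_all
end
end

section
/- Let q be an odd prime power. For c ∈ F_q(t), the statement 'c is a square in F_q((1/t))' is equivalent to the existential statement over F_q(t): ∃ f, deg(f²) ≥ deg(t·(c - f²)). -/
/-!
The hypotheses make `φ` the expansion at infinity (`t ↦ X⁻¹`), so `orderTop (φ h) = -deg h`, and
the degree condition says exactly that `φ(f)²` approximates `φ c` to an order strictly beyond its
own. Given such an `f`, `φ c = φ(f)² (1 + s)` with `0 < orderTop s`, and `1 + s` is a square: in
characteristic `≠ 2` every power series with constant term `1` is `1 - 4a` with `a(0) = 0`, hence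
a substitution instance of `1 - 4X = (1 - 2XC)²`, where `C = 1 + XC²` is the Catalan series.
Conversely, if `φ c = g²`, take `f` with `φ f` the leading monomial of `g`; then
`g² - φ(f)² = (g - φ f)(g + φ f)` has order greater than `2 · order g`.
-/

open Quaternion HahnSeries IsDedekindDomain Polynomial Multiplicative
noncomputable section

/-- `deg A ≥ deg B` in the sense `v_∞(B/A) ≥ 0` (with `deg 0 = -∞`). -/
def DegGe (F : Type) [Field F] (A B : RatFunc F) : Prop :=
  B = 0 ∨ (A ≠ 0 ∧ (B / A).intDegree ≤ 0)

namespace PowerSeries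

variable {R : Type*} [CommRing R]

theorem isSquare_one_sub_four_mul_X : IsSquare (1 - 4 * PowerSeries.X : PowerSeries R) := by
  set c : PowerSeries R := map (Nat.castRingHom R) catalanSeries
  have hc : c ^ 2 * PowerSeries.X + 1 = c := by
    simpa using congrArg (map (Nat.castRingHom R)) catalanSeries_sq_mul_X_add_one
  exact ⟨1 - 2 * PowerSeries.X * c, by linear_combination (-4 * PowerSeries.X) * hc⟩

theorem isSquare_of_constantCoeff_eq_one (h2 : IsUnit (2 : R)) {u : PowerSeries R}
    (hu : constantCoeff u = 1) : IsSquare u := by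
  set a : PowerSeries R := PowerSeries.C (h2.unit⁻¹ ^ 2 : R) * (1 - u)
  have ha : HasSubst a := HasSubst.of_constantCoeff_zero' (by simp [a, hu])
  have h4 : (4 : PowerSeries R) * PowerSeries.C (h2.unit⁻¹ ^ 2 : R) = 1 := by
    rw [← map_ofNat PowerSeries.C, ← map_mul, show (4 : R) = 2 ^ 2 by norm_num, ← mul_pow,
      h2.mul_val_inv, one_pow, map_one]
  have hu_eq : substAlgHom ha (1 - 4 * PowerSeries.X : PowerSeries R) = u := by
    rw [map_sub, map_one, map_mul, map_ofNat, substAlgHom_X, ← mul_assoc, h4]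
    ring
  obtain ⟨s, hs⟩ := isSquare_one_sub_four_mul_X (R := R)
  exact ⟨substAlgHom ha s, by rw [← hu_eq, hs, map_mul]⟩

end PowerSeries

namespace LaurentSeries

variable {R : Type*} [CommRing R]

theorem isSquare_one_add_of_orderTop_pos (h2 : IsUnit (2 : R)) {s : LaurentSeries R}
    (hs : 0 < s.orderTop) : IsSquare (1 + s) := by
  have hord : 0 ≤ s.order := by
    rcases eq_or_ne s 0 with rfl | hs0
    · simp
    · rw [← WithTop.coe_le_coe, order_eq_orderTop_of_ne_zero hs0]; exact hs.le
  obtain ⟨p, rfl⟩ : ∃ p : PowerSeries R, (p : LaurentSeries R) = s :=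
    ⟨_, X_order_mul_powerSeriesPart (Int.toNat_of_nonneg hord)⟩
  have hp : PowerSeries.constantCoeff p = 0 := by
    rw [← PowerSeries.coeff_zero_eq_constantCoeff_apply, ← coeff_coe_powerSeries]
    exact coeff_eq_zero_of_lt_orderTop (by simpa using hs)
  obtain ⟨w, hw⟩ := PowerSeries.isSquare_of_constantCoeff_eq_one h2 (u := 1 + p) (by simp [hp])
  exact ⟨w, by rw [← PowerSeries.coe_one, ← PowerSeries.coe_add, hw, PowerSeries.coe_mul]⟩

theorem isSquare_of_orderTop_lt_orderTop_sub {F : Type*} [Field F] (h2 : (2 : F) ≠ 0)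
    {x m : LaurentSeries F} (hm : IsSquare m) (hxm : m.orderTop < (x - m).orderTop) :
    IsSquare x := by
  have hm0 : m ≠ 0 := orderTop_ne_top.1 hxm.ne_top
  set s := (x - m) / m
  have hx : x = m * (1 + s) := by
    rw [mul_add, mul_one, mul_div_cancel₀ _ hm0, add_sub_cancel]
  have hs : 0 < s.orderTop := by
    have : (x - m).orderTop = s.orderTop + m.orderTop := by
      rw [← orderTop_mul, div_mul_cancel₀ _ hm0]
    exact pos_of_lt_add_left (this ▸ hxm)
  rw [hx]
  exact hm.mul (isSquare_one_add_of_orderTop_pos (isUnit_iff_ne_zero.2 h2) hs)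

end LaurentSeries

namespace HahnSeries

variable {Γ R : Type*} [LinearOrder Γ] [CommRing R]

theorem orderTop_lt_orderTop_sub_single_order [Zero Γ] {x : R⟦Γ⟧} (hx : x ≠ 0) :
    x.orderTop < (x - single x.order x.leadingCoeff).orderTop := by
  have hord : x.orderTop = x.order := (order_eq_orderTop_of_ne_zero hx).symm
  rw [hord]
  exact le_orderTop_of_leadingCoeff_eq hord
    (orderTop_single (leadingCoeff_ne_zero.2 hx)) leadingCoeff_of_single.symm

theorem orderTop_sq_lt_orderTop_sq_sub_sq [AddCommMonoid Γ] [IsOrderedCancelAddMonoid Γ]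
    [NoZeroDivisors R] {x y : R⟦Γ⟧}
    (h : x.orderTop < (x - y).orderTop) : (y ^ 2).orderTop < (x ^ 2 - y ^ 2).orderTop := by
  have hx : x.orderTop ≠ ⊤ := h.ne_top
  have hy : y.orderTop = x.orderTop := by
    simpa using orderTop_sub h
  have hxy : x.orderTop ≤ (x + y).orderTop := by
    simpa [hy] using min_orderTop_le_orderTop_add (x := x) (y := y)
  calc (y ^ 2).orderTop = x.orderTop + x.orderTop := by rw [sq, orderTop_mul, hy]
    _ < (x - y).orderTop + (x + y).orderTop := WithTop.add_lt_add_of_lt_of_le hx h hxy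
    _ = (x ^ 2 - y ^ 2).orderTop := by rw [← orderTop_mul]; ring_nf

end HahnSeries

namespace RatFunc

section ExpansionAtInfinity

variable {F : Type} [Field F] (φ : RatFunc F →+* LaurentSeries F)
  (hφc : ∀ x : F, φ (algebraMap F (RatFunc F) x) = HahnSeries.single (0 : ℤ) x)
  (hφX : φ RatFunc.X * HahnSeries.single (1 : ℤ) (1 : F) = 1)
include hφc hφX

theorem map_algebraMap_mul_X_zpow (a : F) (n : ℤ) :
    φ (algebraMap F (RatFunc F) a * RatFunc.X ^ n) = single (-n) a := by
  have hX : φ RatFunc.X = (single (1 : ℤ) (1 : F))⁻¹ := eq_inv_of_mul_eq_one_left hφX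
  rw [map_mul, map_zpow₀, hφc, hX, inv_zpow', ← RatFunc.single_zpow, single_mul_single,
    zero_add, mul_one]

theorem coeff_map_algebraMap (p : F[X]) (n : ℤ) :
    (φ (algebraMap F[X] (RatFunc F) p)).coeff n = if n ≤ 0 then p.coeff (-n).toNat else 0 := by
  induction p using Polynomial.induction_on' with
  | add p q hp hq =>
    rw [map_add, map_add, HahnSeries.coeff_add, hp, hq]
    split_ifs <;> simp
  | monomial m a =>
    have hmon : algebraMap F[X] (RatFunc F) (monomial m a) =
        algebraMap F (RatFunc F) a * RatFunc.X ^ (m : ℤ) := by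
      rw [← C_mul_X_pow_eq_monomial, map_mul, map_pow, algebraMap_C, algebraMap_X, zpow_natCast]
      rfl
    rw [hmon, map_algebraMap_mul_X_zpow φ hφc hφX, coeff_single, Polynomial.coeff_monomial]
    split_ifs <;> first | rfl | omega

theorem orderTop_map_algebraMap {p : F[X]} (hp : p ≠ 0) :
    (φ (algebraMap F[X] (RatFunc F) p)).orderTop = (-p.natDegree : ℤ) := by
  apply orderTop_eq_of_le
  · rw [HahnSeries.mem_support, coeff_map_algebraMap φ hφc hφX, if_pos (by omega),
      show (-(-(p.natDegree : ℤ))).toNat = p.natDegree by omega]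
    exact Polynomial.leadingCoeff_ne_zero.2 hp
  · intro g hg
    rw [HahnSeries.mem_support, coeff_map_algebraMap φ hφc hφX] at hg
    split_ifs at hg
    · have := le_natDegree_of_ne_zero hg
      omega
    · exact absurd rfl hg

theorem orderTop_map {h : RatFunc F} (hh : h ≠ 0) : (φ h).orderTop = (-h.intDegree : ℤ) := by
  have hden := algebraMap_ne_zero h.denom_ne_zero
  have hfrac : φ h * φ (algebraMap F[X] (RatFunc F) h.denom) =
      φ (algebraMap F[X] (RatFunc F) h.num) := by
    rw [← map_mul, ← div_mul_cancel₀ (algebraMap F[X] (RatFunc F) h.num) hden, num_div_denom]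
  have hord := congrArg HahnSeries.orderTop hfrac
  rw [orderTop_mul, orderTop_map_algebraMap φ hφc hφX h.denom_ne_zero,
    orderTop_map_algebraMap φ hφc hφX (num_ne_zero hh)] at hord
  obtain ⟨k, hk⟩ := WithTop.ne_top_iff_exists.1
    (orderTop_ne_top.2 ((map_ne_zero φ).2 hh))
  rw [← hk] at hord ⊢
  have : k + -(h.denom.natDegree : ℤ) = -h.num.natDegree := by exact_mod_cast hord
  rw [intDegree]
  exact_mod_cast (by omega : k = -(h.num.natDegree - h.denom.natDegree : ℤ))

theorem degGe_X_mul_iff_orderTop_lt {A : RatFunc F} (hA : A ≠ 0) (B : RatFunc F) :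
    DegGe F A (RatFunc.X * B) ↔ (φ A).orderTop < (φ B).orderTop := by
  rcases eq_or_ne B 0 with rfl | hB
  · simpa [DegGe] using hA
  have hXB : RatFunc.X * B ≠ 0 := mul_ne_zero X_ne_zero hB
  rw [orderTop_map φ hφc hφX hA, orderTop_map φ hφc hφX hB, WithTop.coe_lt_coe, DegGe,
    or_iff_right hXB, and_iff_right hA, div_eq_mul_inv, intDegree_mul hXB (inv_ne_zero hA),
    intDegree_mul X_ne_zero hB, intDegree_inv, intDegree_X]
  omega

end ExpansionAtInfinity

end RatFunc

/-- For `c ∈ F_q(t)`, `c` is a square in `F_q((1/t))` (embedded via `φ` with `φ t = X⁻¹`)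
iff `∃ f, deg(f²) ≥ deg(t·(c - f²))`. -/
theorem stmt14 (F : Type) [Field F] [Fintype F] (hq : Odd (Fintype.card F))
    (φ : RatFunc F →+* LaurentSeries F)
    (hφc : ∀ x : F, φ (algebraMap F (RatFunc F) x) = HahnSeries.single (0 : ℤ) x)
    (hφX : φ RatFunc.X * HahnSeries.single (1 : ℤ) (1 : F) = 1)
    (c : RatFunc F) :
    IsSquare (φ c) ↔ ∃ f : RatFunc F, DegGe F (f ^ 2) (RatFunc.X * (c - f ^ 2)) := by
  have h2 : (2 : F) ≠ 0 := Ring.two_ne_zero fun hchar ↦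
    Nat.not_even_iff_odd.2 hq (Nat.even_iff.2 (FiniteField.even_card_of_char_two hchar))
  constructor
  · rintro ⟨g, hg⟩
    rcases eq_or_ne g 0 with rfl | hg0
    · have hc : c = 0 := (map_eq_zero φ).1 (by simpa using hg)
      exact ⟨0, Or.inl (by simp [hc])⟩
    obtain ⟨f, hf⟩ : ∃ f, φ f = single g.order g.leadingCoeff :=
      ⟨_, by rw [RatFunc.map_algebraMap_mul_X_zpow φ hφc hφX, neg_neg]⟩
    have hf0 : f ≠ 0 := fun h ↦ hg0 (by
      rwa [h, map_zero, eq_comm, single_eq_zero_iff, HahnSeries.leadingCoeff_eq_zero] at hf)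
    refine ⟨f, (RatFunc.degGe_X_mul_iff_orderTop_lt φ hφc hφX (pow_ne_zero 2 hf0) _).2 ?_⟩
    rw [map_pow, map_sub, map_pow, hf, hg, ← sq]
    exact orderTop_sq_lt_orderTop_sq_sub_sq (orderTop_lt_orderTop_sub_single_order hg0)
  · rintro ⟨f, hf⟩
    rcases eq_or_ne f 0 with rfl | hf0
    · have hc : c = 0 := by simpa [DegGe, RatFunc.X_ne_zero] using hf
      exact ⟨0, by simp [hc]⟩
    rw [RatFunc.degGe_X_mul_iff_orderTop_lt φ hφc hφX (pow_ne_zero 2 hf0), map_sub] at hf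
    exact LaurentSeries.isSquare_of_orderTop_lt_orderTop_sub h2 (by simp [IsSquare.sq]) hf

end
end

section
/- Let q be an odd prime power and f(t) ∈ F_q[t] monic irreducible of even degree. Choose monic irreducible d(t) of odd degree with d(t) ≡ c(t) mod f(t), where c(t) is a nonsquare in F_q[t]/(f(t)). Then the Legendre symbols satisfy (z/d) = -1 for any nonsquare z ∈ F_q, (f/d) = -1, and hence (z·f(t)/d(t)) = 1. -/
open Quaternion HahnSeries IsDedekindDomain Polynomial Multiplicative
noncomputable section

/-! For `d` monic irreducible over `𝔽_q` with `q` odd, `g` is a square modulo `d` exactly when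
the norm of `g mod d` from `𝔽_q[t]/(d)` down to `𝔽_q` is a square: by Euler's criterion on both
sides, since the norm is the `(q^(deg d) - 1)/(q - 1)`-th power map. That norm is the resultant
`Res(d, g)`. Hence `(z/d)` is decided by `z ^ deg d`, a nonsquare because `deg d` is odd, and
`Res(d, f) = (-1)^(deg d · deg f) Res(f, d) = Res(f, d)` turns `(f/d)` into
`(d/f) = (c/f) = -1`. Finally, in a finite field the product of two nonsquares is a square. -/

theorem Nat.geomSum_mul_div_two {q : ℕ} (hq : Odd q) (r : ℕ) :
    (∑ i ∈ Finset.range r, q ^ i) * (q / 2) = q ^ r / 2 := by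
  obtain ⟨h, rfl⟩ := hq
  have key : 2 * ((∑ i ∈ Finset.range r, (2 * h + 1) ^ i) * h) + 1 = (2 * h + 1) ^ r := by
    rw [← geom_sum_mul_add]; ring
  rw [show (2 * h + 1) / 2 = h by omega]
  omega

namespace FiniteField

variable {K : Type*} [Field K] [Fintype K]

theorem isSquare_mul_of_not_isSquare {a b : K} (ha : ¬IsSquare a) (hb : ¬IsSquare b) :
    IsSquare (a * b) := by
  classical
  have hab : a * b ≠ 0 :=
    mul_ne_zero (fun h => ha (h ▸ IsSquare.zero)) (fun h => hb (h ▸ IsSquare.zero))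
  rw [← quadraticChar_one_iff_isSquare hab, map_mul,
    quadraticChar_neg_one_iff_not_isSquare.mpr ha, quadraticChar_neg_one_iff_not_isSquare.mpr hb]
  norm_num

theorem not_isSquare_pow {a : K} (ha : ¬IsSquare a) {n : ℕ} (hn : Odd n) :
    ¬IsSquare (a ^ n) := by
  classical
  rw [← quadraticChar_neg_one_iff_not_isSquare, map_pow,
    quadraticChar_neg_one_iff_not_isSquare.mpr ha, hn.neg_one_pow]

variable {L : Type*} [Field L] [Fintype L] [Algebra K L]

theorem isSquare_norm_iff (hK : ringChar K ≠ 2) {x : L} :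
    IsSquare (Algebra.norm K x) ↔ IsSquare x := by
  have hL : ringChar L ≠ 2 := by rwa [← Algebra.ringChar_eq K L]
  rcases eq_or_ne x 0 with rfl | hx
  · simp
  have hNx : Algebra.norm K x ≠ 0 := Algebra.norm_ne_zero_iff.mpr hx
  have hodd : Odd (Fintype.card K) := Nat.odd_iff.mpr (odd_card_of_char_ne_two hK)
  rw [isSquare_iff hK hNx, isSquare_iff hL hx, ← (algebraMap K L).injective.eq_iff, map_pow,
    map_one, algebraMap_norm_eq_pow_sum, ← pow_mul, Nat.card_eq_fintype_card,
    Nat.geomSum_mul_div_two hodd, ← Module.card_eq_pow_finrank]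

end FiniteField

namespace AdjoinRoot

theorem norm_mk_eq_resultant_s17 {F : Type*} [Field F] [PerfectField F] {d : F[X]}
    (hdm : d.Monic) (hdi : Irreducible d) (g : F[X]) :
    Algebra.norm F (mk d g) = resultant d g := by
  classical
  have := Fact.mk hdi
  let Ω := AlgebraicClosure F
  have : Module.Finite F (AdjoinRoot d) := (powerBasis hdi.ne_zero).finite
  have hres := resultant_eq_prod_eval (d.map (algebraMap F Ω)) (g.map (algebraMap F Ω))
    g.natDegree natDegree_map_le (IsAlgClosed.splits _)
  rw [natDegree_map, (hdm.map _).leadingCoeff, one_pow, one_mul, resultant_map_map] at hres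
  apply (algebraMap F Ω).injective
  rw [Algebra.norm_eq_prod_embeddings F Ω, hres, ← aeval_eq]
  simp_rw [← aeval_algHom_apply]
  -- the embeddings `σ` correspond to the roots `σ (root d)` of `d`, which are simple
  rw [Fintype.prod_equiv (equiv Ω F d hdi.ne_zero)
    (fun σ => aeval (σ (root d)) g) (fun x => aeval x.1 g) (fun σ => rfl),
    Finset.prod_mem_multiset _ _ (fun x => aeval x g) (fun x => rfl),
    Finset.prod_eq_multiset_prod, Multiset.toFinset_val,
    Multiset.dedup_eq_self.mpr (nodup_roots (PerfectField.separable_of_irreducible hdi).map)]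
  simp_rw [eval_map_algebraMap]

variable {F : Type*} [Field F] [Fintype F]

instance {d : F[X]} [hd : Fact (Irreducible d)] : Fintype (AdjoinRoot d) :=
  Module.fintypeOfFintype (powerBasis hd.out.ne_zero).basis

theorem isSquare_mk_iff_isSquare_resultant (hF : ringChar F ≠ 2) {d : F[X]} (hdm : d.Monic)
    (hdi : Irreducible d) (g : F[X]) : IsSquare (mk d g) ↔ IsSquare (resultant d g) := by
  have := Fact.mk hdi
  rw [← norm_mk_eq_resultant_s17 hdm hdi, FiniteField.isSquare_norm_iff hF]

theorem isSquare_mk_C_iff (hF : ringChar F ≠ 2) {d : F[X]} (hdm : d.Monic) (hdi : Irreducible d)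
    (z : F) : IsSquare (mk d (Polynomial.C z)) ↔ IsSquare (z ^ d.natDegree) := by
  rw [isSquare_mk_iff_isSquare_resultant hF hdm hdi, resultant_C_right, coeff_natDegree,
    hdm.leadingCoeff, one_pow, one_mul]

theorem isSquare_mk_iff_isSquare_mk (hF : ringChar F ≠ 2) {f d : F[X]} (hfm : f.Monic)
    (hfi : Irreducible f) (hdm : d.Monic) (hdi : Irreducible d)
    (hfd : Even (d.natDegree * f.natDegree)) : IsSquare (mk d f) ↔ IsSquare (mk f d) := by
  rw [isSquare_mk_iff_isSquare_resultant hF hdm hdi,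
    isSquare_mk_iff_isSquare_resultant hF hfm hfi, resultant_comm, hfd.neg_one_pow, one_mul]

end AdjoinRoot

/-- For `f` monic irreducible of even degree and `d` monic irreducible of odd degree with
`d ≡ c mod f`, `c` a nonsquare mod `f`: `(z/d) = -1` for every nonsquare `z ∈ F_q`,
`(f/d) = -1`, and `(z·f/d) = 1`. -/
theorem stmt17 (F : Type) [Field F] [Fintype F] (hq : Odd (Fintype.card F))
    (f d c : Polynomial F) (hfm : f.Monic) (hfi : Irreducible f) (hfe : Even f.natDegree)
    (hdm : d.Monic) (hdi : Irreducible d) (hdo : Odd d.natDegree)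
    (hdc : f ∣ (d - c)) (hc : ¬ IsSquare (Ideal.Quotient.mk (Ideal.span {f}) c)) :
    ∀ z : F, ¬ IsSquare z →
      legSym F d (C z) = -1 ∧ legSym F d f = -1 ∧ legSym F d (C z * f) = 1 := by
  intro z hz
  have hF : ringChar F ≠ 2 := by
    rwa [Ne, FiniteField.even_card_iff_char_two, ← Nat.even_iff,
      Nat.not_even_iff_odd]
  have hzd : ¬IsSquare (AdjoinRoot.mk d (Polynomial.C z)) := by
    rw [AdjoinRoot.isSquare_mk_C_iff hF hdm hdi]
    exact FiniteField.not_isSquare_pow hz hdo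
  have hfd : ¬IsSquare (AdjoinRoot.mk d f) := by
    rwa [AdjoinRoot.isSquare_mk_iff_isSquare_mk hF hfm hfi hdm hdi (hfe.mul_left _),
      AdjoinRoot.mk_eq_mk.mpr hdc]
  have := Fact.mk hdi
  have hzfd : IsSquare (AdjoinRoot.mk d (Polynomial.C z * f)) := by
    rw [map_mul]
    exact FiniteField.isSquare_mul_of_not_isSquare hzd hfd
  exact ⟨if_neg hzd, if_neg hfd, if_pos hzfd⟩
end
end
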